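/- arXiv:2110.02569 — 3 statements merged into one kernel-verified Lean document; each statement's English description precedes it below -/
import Mathlib

section
/- The function Ω(t) = (−θ)^{−q/(q−1)} ∏_{i≥1} (1 − t/θ^{q^i}) is a unit in the Tate algebra T and satisfies the functional equation Ω^{(−1)} = (t − θ)Ω, where Ω^{(−1)} denotes the (−1)-st Frobenius twist applied to the coefficients. -/
/-!
Put `r = ‖θ‖⁻¹ < 1`. Power series with constant term `1` whose `n`-th coefficient has norm at
most `rⁿ` form a monoid that, by the ultrametric inequality, is closed under inversion and
(coefficientwise) limits. Each factor `1 - t/θ^{qⁱ}` lies in it, and consecutive partial products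
differ by a term of size `r^{qⁱ}`, so the product converges there; the limit and its inverse then
have coefficients tending to `0`. Since `φ = (·)^q` sends `θ^{-qⁱ}` to `θ^{-q^{i+1}}`, twisting
`(1 - t/θ) ∏_{i≥1}` just re-indexes the product, and with `φ(η⁻¹) = ((-θ)η)⁻¹` this becomes
`Ω = ((t - θ) Ω)^{(1)}`, i.e. `Ω^{(-1)} = (t - θ) Ω`.
-/

open Filter Finset Topology
open scoped NNReal

lemma Finset.prod_Icc_one_eq_prod_range {M : Type*} [CommMonoid M] (f : ℕ → M) (N : ℕ) :
    ∏ i ∈ Icc 1 N, f i = ∏ i ∈ range N, f (i + 1) := by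
  rw [← Ico_add_one_right_eq_Icc, prod_Ico_eq_prod_range]
  simp [add_comm]

namespace PowerSeries

open WithPiTopology

section Normalized

variable {F : Type*} [NormedField F] [IsUltrametricDist F]

def normalizedBounded (r : ℝ≥0) : Submonoid F⟦X⟧ where
  carrier := {f | constantCoeff f = 1 ∧ ∀ n, ‖coeff n f‖ ≤ (r : ℝ) ^ n}
  one_mem' := ⟨map_one _, fun n => by rcases n with _ | n <;> simp [coeff_one]⟩
  mul_mem' := by
    rintro f g ⟨hf0, hf⟩ ⟨hg0, hg⟩
    refine ⟨by simp [hf0, hg0], fun n => ?_⟩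
    rw [coeff_mul]
    refine IsUltrametricDist.norm_sum_le_of_forall_le_of_nonneg (by positivity) ?_
    rintro ⟨i, j⟩ hij
    rw [HasAntidiagonal.mem_antidiagonal] at hij
    rw [norm_mul, ← hij, pow_add]
    exact mul_le_mul (hf i) (hg j) (norm_nonneg _) (by positivity)

variable {r : ℝ≥0} {f : F⟦X⟧}

lemma one_sub_C_mul_X_mem_normalizedBounded {a : F} (ha : ‖a‖ ≤ r) :
    1 - C a * X ∈ normalizedBounded r := by
  refine ⟨by simp, fun n => ?_⟩
  rcases n with _ | _ | n <;> simp [coeff_one, ha]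

lemma inv_mem_normalizedBounded (hf : f ∈ normalizedBounded r) :
    f⁻¹ ∈ normalizedBounded r := by
  refine ⟨by simp [hf.1], fun n => ?_⟩
  induction n using Nat.strong_induction_on with
  | _ n ih =>
  rw [coeff_inv, hf.1, inv_one]
  split_ifs with hn
  · simp [hn]
  rw [norm_mul, norm_neg, norm_one, one_mul]
  refine IsUltrametricDist.norm_sum_le_of_forall_le_of_nonneg (by positivity) ?_
  rintro ⟨i, j⟩ hij
  rw [HasAntidiagonal.mem_antidiagonal] at hij
  split_ifs with hj
  · rw [norm_mul, ← hij, pow_add]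
    exact mul_le_mul (hf.2 i) (ih j hj) (norm_nonneg _) (by positivity)
  · simp

lemma norm_coeff_X_mul_le_one (hr : r ≤ 1) (hf : f ∈ normalizedBounded r) (n : ℕ) :
    ‖coeff n (X * f)‖ ≤ 1 := by
  rcases n with _ | n
  · simp
  · rw [coeff_succ_X_mul]
    exact (hf.2 n).trans (pow_le_one₀ r.2 hr)

lemma tendsto_norm_coeff_C_mul (hr : r < 1) (hf : f ∈ normalizedBounded r) (a : F) :
    Tendsto (fun n => ‖coeff n (C a * f)‖) atTop (𝓝 0) := by
  simp only [coeff_C_mul, norm_mul]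
  have hlim : Tendsto (fun n => ‖a‖ * (r : ℝ) ^ n) atTop (𝓝 0) := by
    simpa using (tendsto_pow_atTop_nhds_zero_of_lt_one r.2 hr).const_mul ‖a‖
  exact squeeze_zero (fun n => by positivity)
    (fun n => mul_le_mul_of_nonneg_left (hf.2 n) (norm_nonneg a)) hlim

lemma isClosed_normalizedBounded : IsClosed (normalizedBounded (F := F) r : Set F⟦X⟧) := by
  have hbound : IsClosed (⋂ n, {f : F⟦X⟧ | ‖coeff n f‖ ≤ (r : ℝ) ^ n}) :=
    isClosed_iInter fun n => isClosed_le (continuous_coeff F n).norm continuous_const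
  rw [← Set.ofPred_forall] at hbound
  exact (isClosed_eq (continuous_constantCoeff F) continuous_const).inter hbound

end Normalized

lemma exists_tendsto_of_norm_coeff_sub_le_geometric {R : Type*} [NormedRing R] [CompleteSpace R]
    {f : ℕ → R⟦X⟧} {C r : ℝ} (hr : r < 1)
    (hf : ∀ N n, ‖coeff n (f N) - coeff n (f (N + 1))‖ ≤ C * r ^ N) :
    ∃ g, Tendsto f atTop (𝓝 g) := by
  have hcoeff : ∀ n, ∃ a, Tendsto (fun N => coeff n (f N)) atTop (𝓝 a) := fun n =>
    cauchySeq_tendsto_of_complete <| cauchySeq_of_le_geometric r C hr fun N => by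
      rw [dist_eq_norm]; exact hf N n
  choose a ha using hcoeff
  exact ⟨mk a, (tendsto_iff_coeff_tendsto R _ _ _).2 fun n => by simpa using ha n⟩

noncomputable def linearFactorProd {R : Type*} [CommRing R] (u : ℕ → R) (N : ℕ) : R⟦X⟧ :=
  ∏ i ∈ range N, (1 - C (u i) * X)

lemma exists_tendsto_linearFactorProd {F : Type*} [NormedField F] [IsUltrametricDist F]
    [CompleteSpace F] {r : ℝ≥0} (hr : r < 1) {u : ℕ → F}
    (hu : ∀ i, ‖u i‖ ≤ (r : ℝ) ^ (i + 1)) :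
    ∃ P ∈ normalizedBounded r, Tendsto (linearFactorProd u) atTop (𝓝 P) := by
  have hr' : (r : ℝ) ≤ 1 := hr.le
  have hmem : ∀ N, linearFactorProd u N ∈ normalizedBounded r := fun N =>
    prod_mem fun i _ => one_sub_C_mul_X_mem_normalizedBounded
      ((hu i).trans (pow_le_of_le_one r.2 hr' i.succ_ne_zero))
  have hstep : ∀ N n, coeff n (linearFactorProd u N) - coeff n (linearFactorProd u (N + 1)) =
      u N * coeff n (X * linearFactorProd u N) := fun N n => by
    rw [← map_sub, ← coeff_C_mul, linearFactorProd, linearFactorProd, prod_range_succ]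
    congr 1
    ring
  obtain ⟨P, hP⟩ :=
      exists_tendsto_of_norm_coeff_sub_le_geometric (f := linearFactorProd u) (C := 1) hr
        fun N n => by
          rw [hstep, norm_mul, one_mul]
          exact (mul_le_mul ((hu N).trans (pow_le_pow_of_le_one r.2 hr' N.le_succ))
            (norm_coeff_X_mul_le_one hr' (hmem N) n) (norm_nonneg _) (pow_nonneg r.2 N)).trans_eq
            (mul_one _)
  exact ⟨P, isClosed_normalizedBounded.mem_of_tendsto hP (Eventually.of_forall hmem), hP⟩

section Twist

variable {R : Type*} [CommRing R] [TopologicalSpace R]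

lemma continuous_map {φ : R →+* R} (hφ : Continuous φ) : Continuous (map φ) := by
  refine continuous_iff_continuousAt.2 fun f =>
    (tendsto_iff_coeff_tendsto R _ _ _).2 fun n => ?_
  simp only [coeff_map]
  exact (hφ.tendsto _).comp ((continuous_coeff R n).tendsto f)

lemma map_one_sub_C_mul_X_mul_eq_of_tendsto [IsTopologicalRing R] [T2Space R] {φ : R →+* R}
    (hφ : Continuous φ) {u : ℕ → R} (hu : ∀ i, φ (u i) = u (i + 1)) {P : R⟦X⟧}
    (hP : Tendsto (linearFactorProd fun i => u (i + 1)) atTop (𝓝 P)) :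
    map φ ((1 - C (u 0) * X) * P) = P := by
  have hshift : ∀ N, map φ ((1 - C (u 0) * X) * linearFactorProd (fun i => u (i + 1)) N) =
      linearFactorProd (fun i => u (i + 1)) (N + 1) := fun N => by
    rw [linearFactorProd, mul_comm, ← prod_range_succ' (fun i => 1 - C (u i) * X), map_prod]
    simp [linearFactorProd, hu]
  refine tendsto_nhds_unique ?_ (hP.comp (tendsto_add_atTop_nat 1))
  simp only [Function.comp_def, ← hshift]
  exact ((continuous_map hφ).tendsto _).comp (hP.const_mul _)

lemma map_symm_C_mul_eq_X_sub_C_mul {F : Type*} [Field F] (φ : F ≃+* F) {θ η : F}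
    (hθ : θ ≠ 0) (hφη : φ η⁻¹ = (-θ * η)⁻¹) {P : F⟦X⟧}
    (hP : map (φ : F →+* F) ((1 - C θ⁻¹ * X) * P) = P) :
    map (φ.symm : F →+* F) (C (-θ * η)⁻¹ * P) = (X - C θ) * (C (-θ * η)⁻¹ * P) := by
  have hη : η⁻¹ = -(θ * (-θ * η)⁻¹) := by field_simp
  have hθθ : (C θ * C θ⁻¹ : F⟦X⟧) = 1 := by
    rw [← map_mul, mul_inv_cancel₀ hθ, map_one]
  have hlin : C η⁻¹ * ((1 - C θ⁻¹ * X) * P) = (X - C θ) * (C (-θ * η)⁻¹ * P) := by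
    rw [hη, map_neg, map_mul]
    linear_combination (C (-θ * η)⁻¹ * X * P) * hθθ
  have htwist :
      map (φ : F →+* F) ((X - C θ) * (C (-θ * η)⁻¹ * P)) = C (-θ * η)⁻¹ * P := by
    rw [← hlin, map_mul, map_C, RingEquiv.coe_toRingHom, hφη, hP]
  rw [← htwist, ← RingHom.comp_apply, ← map_comp, RingEquiv.symm_comp, map_id, htwist]
  rfl

end Twist

end PowerSeries

open PowerSeries PowerSeries.WithPiTopology

/-- The Anderson–Thakur function
`Ω(t) = (−θ)^{−q/(q−1)} ∏_{i≥1} (1 − t/θ^{qⁱ})`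
is a unit in the Tate algebra `T` (power series with coefficient norms tending to `0`)
and satisfies `Ω^{(−1)} = (t − θ) Ω`, where `Ω^{(−1)}` is the inverse Frobenius twist
on coefficients.  Here `F` is a complete non-archimedean valued field with `q`-power
Frobenius automorphism `φ`, `‖θ‖ > 1`, and `η = (−θ)^{1/(q−1)}` is a fixed
`(q−1)`-st root of `−θ` (so that `(−θ)^{−q/(q−1)} = ((−θ)·η)⁻¹`).  The last clause
states that the partial products of the defining infinite product converge,
coefficientwise, to `Ω`. -/
theorem stmt3 {F : Type*} [NontriviallyNormedField F] [CompleteSpace F]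
    [IsUltrametricDist F]
    (q : ℕ) (hq : 1 < q) (φ : F ≃+* F) (hφ : ∀ x : F, φ x = x ^ q)
    (θ : F) (hθ : 1 < ‖θ‖) (η : F) (hη : η ^ (q - 1) = -θ) :
    ∃ Ω : PowerSeries F,
      Filter.Tendsto (fun n => ‖PowerSeries.coeff n Ω‖) Filter.atTop (nhds 0) ∧
      (∃ Ωinv : PowerSeries F,
          Filter.Tendsto (fun n => ‖PowerSeries.coeff n Ωinv‖) Filter.atTop (nhds 0) ∧
          Ω * Ωinv = 1) ∧
      PowerSeries.map (φ.symm : F →+* F) Ω =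
        (PowerSeries.X - PowerSeries.C θ) * Ω ∧
      (∀ n : ℕ,
        Filter.Tendsto
          (fun N : ℕ => PowerSeries.coeff n
            (PowerSeries.C (((-θ) * η)⁻¹) *
              ∏ i ∈ Finset.Icc 1 N,
                (1 - PowerSeries.C (θ ^ q ^ i)⁻¹ * PowerSeries.X)))
          Filter.atTop (nhds (PowerSeries.coeff n Ω))) := by
  have hθ0 : θ ≠ 0 := norm_pos_iff.1 (one_pos.trans hθ)
  have hη0 : η ≠ 0 := by
    rintro rfl
    exact hθ0 (neg_eq_zero.1 (hη.symm.trans (zero_pow (by omega))))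
  set v : ℕ → F := fun i => (θ ^ q ^ i)⁻¹
  have hr : ‖θ‖₊⁻¹ < 1 := inv_lt_one_of_one_lt₀ hθ
  obtain ⟨P, hPmem, hP⟩ := exists_tendsto_linearFactorProd hr (u := fun i => v (i + 1))
    fun i => by
      simp only [v, norm_inv, norm_pow, NNReal.coe_inv, coe_nnnorm, ← inv_pow]
      exact pow_le_pow_of_le_one (by positivity) hr.le (Nat.lt_pow_self hq).le
  have hφv : ∀ i, φ (v i) = v (i + 1) := fun i => by
    simp only [v, hφ, inv_pow, ← pow_mul, ← pow_succ]
  have hφη : φ η⁻¹ = (-θ * η)⁻¹ := by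
    rw [hφ, inv_pow, ← Nat.sub_add_cancel hq.le, pow_succ, hη]
  have hφcont : Continuous φ := by
    rw [show ⇑φ = fun x => x ^ q from funext hφ]
    exact continuous_pow q
  have hfix : PowerSeries.map (φ : F →+* F) ((1 - C θ⁻¹ * X) * P) = P := by
    simpa [v] using map_one_sub_C_mul_X_mul_eq_of_tendsto (φ := (φ : F →+* F)) hφcont hφv hP
  refine ⟨C (-θ * η)⁻¹ * P, tendsto_norm_coeff_C_mul hr hPmem _,
    ⟨C (-θ * η) * P⁻¹,
      tendsto_norm_coeff_C_mul hr (inv_mem_normalizedBounded hPmem) _, ?_⟩,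
    map_symm_C_mul_eq_X_sub_C_mul φ hθ0 hφη hfix, fun n => ?_⟩
  · rw [mul_mul_mul_comm, ← map_mul, inv_mul_cancel₀ (by simp [hθ0, hη0]), map_one, one_mul]
    exact PowerSeries.mul_inv_cancel P (by simp [hPmem.1])
  · simp only [prod_Icc_one_eq_prod_range fun i => 1 - C (θ ^ q ^ i)⁻¹ * X]
    exact ((continuous_coeff F n).tendsto _).comp (hP.const_mul _)
end

section
/- For a t-module G = (G_a^s, φ) over an A-field L of generic characteristic, there exists a unique power series Exp_G = Σ_{i≥0} α_i τ^i ∈ Mat_s(L)[[τ]] with α_0 = Id_s satisfying the functional equation Exp_G ∘ dφ(t) = φ(t) ∘ Exp_G, where dφ(t) is the constant (degree-zero in τ) term of φ(t). -/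
/-!
Comparing `τ^{n}`-coefficients, the functional equation for `n ≥ 1` says
`αₙ · A₀^{(n)} - A₀ · αₙ = Σ_{1 ≤ j ≤ n} A_j · α_{n-j}^{(j)}`. With `A₀ = θ + N`, the operator
`X ↦ X · A₀^{(n)} - A₀ · X` is `(θ^{q^n} - θ) · id` plus the difference of the commuting nilpotent
operators `X ↦ X · N^{(n)}` and `X ↦ N · X`. Since `θ` is transcendental, `θ^{q^n} ≠ θ`, so the
operator is invertible and `αₙ` is determined by `α₀, …, α_{n-1}`.
-/

open Function Finset Polynomial

theorem existsUnique_eq_of_dependsOn_lt {M : Type*} [Nonempty M] (F : ℕ → (ℕ → M) → M)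
    (hF : ∀ n f g, (∀ k < n, f k = g k) → F n f = F n g) :
    ∃! f : ℕ → M, ∀ n, f n = F n f := by
  let f : ℕ → M := WellFoundedLT.fix fun n prev =>
    F n fun k => if h : k < n then prev k h else Classical.arbitrary M
  have hf : ∀ n, f n = F n f := fun n =>
    (WellFoundedLT.fix_eq _ n).trans (hF n _ _ fun k hk => dif_pos hk)
  refine ⟨f, hf, fun g hg => funext fun n => ?_⟩
  induction n using Nat.strong_induction_on with
  | _ n ih => rw [hg n, hf n]; exact hF n g f ih

theorem existsUnique_seq_of_bijective {M N : Type*} (a : M) (T : ℕ → M → N)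
    (hT : ∀ n, Bijective (T n)) (R : ℕ → (ℕ → M) → N)
    (hR : ∀ n f g, (∀ k ≤ n, f k = g k) → R n f = R n g) :
    ∃! f : ℕ → M, f 0 = a ∧ ∀ n, T n (f (n + 1)) = R n f := by
  have : Nonempty M := ⟨a⟩
  let F : ℕ → (ℕ → M) → M := fun n f =>
    Nat.casesOn n a fun n => (Equiv.ofBijective _ (hT n)).symm (R n f)
  have hF : ∀ n f g, (∀ k < n, f k = g k) → F n f = F n g := by
    rintro (_ | n) f g hfg
    · rfl
    · exact congrArg (Equiv.ofBijective _ (hT n)).symm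
        (hR n f g fun k hk => hfg k (Nat.lt_succ_of_le hk))
  refine (existsUnique_congr fun f => ?_).1 (existsUnique_eq_of_dependsOn_lt F hF)
  rw [← Nat.and_forall_add_one]
  exact and_congr Iff.rfl (forall_congr' fun n => Equiv.eq_symm_apply _)

theorem bijective_mul_sub_mul_of_isNilpotent {K R : Type*} [Field K] [Ring R] [Algebra K R]
    {a b : K} (hab : a ≠ b) {N N' : R} (hN : IsNilpotent N) (hN' : IsNilpotent N') :
    Bijective fun X : R => X * (b • 1 + N') - (a • 1 + N) * X := by
  set D : Module.End K R := LinearMap.mulRight K N' - LinearMap.mulLeft K N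
  have hD : IsNilpotent D := by
    refine (LinearMap.commute_mulLeft_right N N').symm.isNilpotent_sub ?_ ?_
    · obtain ⟨k, hk⟩ := hN'
      exact ⟨k, by rw [LinearMap.pow_mulRight, hk, LinearMap.mulRight_zero_eq_zero]⟩
    · obtain ⟨k, hk⟩ := hN
      exact ⟨k, by rw [LinearMap.pow_mulLeft, hk, LinearMap.mulLeft_zero_eq_zero]⟩
  have hunit : IsUnit (algebraMap K (Module.End K R) (b - a)) :=
    (isUnit_iff_ne_zero.2 (sub_ne_zero.2 hab.symm)).map _
  convert (Module.End.isUnit_iff _).1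
    (hD.isUnit_add_left_of_commute hunit (Algebra.commute_algebraMap_left _ _).symm) using 1
  funext X
  simp only [D, Algebra.algebraMap_eq_smul_one, LinearMap.add_apply, LinearMap.sub_apply,
    LinearMap.smul_apply, Module.End.one_apply, LinearMap.mulRight_apply,
    LinearMap.mulLeft_apply, mul_add, add_mul, Algebra.mul_smul_comm, Algebra.smul_mul_assoc,
    mul_one, one_mul, sub_smul]
  abel

theorem FiniteField.coe_frobeniusAlgHom_pow (K L : Type*) [Field K] [Fintype K] [CommRing L]
    [Algebra K L] (n : ℕ) :
    ⇑(frobeniusAlgHom K L ^ n) = fun x => x ^ Fintype.card K ^ n := by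
  rw [AlgHom.coe_pow, coe_frobeniusAlgHom, pow_iterate]

theorem Transcendental.pow_card_pow_ne_self {K L : Type*} [Field K] [Fintype K] [CommRing L]
    [Algebra K L] {θ : L} (hθ : Transcendental K θ) {n : ℕ} (hn : n ≠ 0) :
    θ ^ Fintype.card K ^ n ≠ θ := fun h =>
  FiniteField.X_pow_card_pow_sub_X_ne_zero K hn Fintype.one_lt_card <|
    transcendental_iff.1 hθ _ (by rw [map_sub, map_pow, aeval_X, h, sub_self])

theorem Matrix.map_smul_one_add {n R S : Type*} [Fintype n] [DecidableEq n] [Semiring R]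
    [Semiring S] (f : R →+* S) (a : R) (N : Matrix n n R) :
    (a • 1 + N).map f = f a • 1 + N.map f := by
  ext i j
  by_cases h : i = j <;> simp [h]

theorem bijective_mul_frobenius_sub_mul {K L : Type*} [Field K] [Fintype K] [Field L]
    [Algebra K L] {θ : L} (hθ : Transcendental K θ) {ι : Type*} [Fintype ι] [DecidableEq ι]
    {N : Matrix ι ι L}
    (hN : IsNilpotent N) {n : ℕ} (hn : n ≠ 0) :
    Bijective fun X =>
      X * (θ • 1 + N).map (fun x => x ^ Fintype.card K ^ n) - (θ • 1 + N) * X := by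
  set φ : L →+* L := (FiniteField.frobeniusAlgHom K L ^ n).toRingHom
  have hφ : ⇑φ = fun x => x ^ Fintype.card K ^ n := FiniteField.coe_frobeniusAlgHom_pow K L n
  rw [← hφ, Matrix.map_smul_one_add]
  refine bijective_mul_sub_mul_of_isNilpotent ?_ hN (hN.map φ.mapMatrix)
  rw [hφ]
  exact (hθ.pow_card_pow_ne_self hn).symm

theorem mul_map_pow_eq_sum_succ_iff {ι L : Type*} [Fintype ι] [DecidableEq ι] [Ring L] (q : ℕ)
    (A α : ℕ → Matrix ι ι L) (n : ℕ) :
    α (n + 1) * (A 0).map (fun x => x ^ q ^ (n + 1)) =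
        ∑ j ∈ range (n + 1 + 1), A j * (α (n + 1 - j)).map (fun x => x ^ q ^ j) ↔
      α (n + 1) * (A 0).map (fun x => x ^ q ^ (n + 1)) - A 0 * α (n + 1) =
        ∑ j ∈ range (n + 1), A (j + 1) * (α (n - j)).map (fun x => x ^ q ^ (j + 1)) := by
  simp only [sum_range_succ', Nat.add_sub_add_right, Nat.sub_zero, pow_zero, pow_one,
    Matrix.map_id']
  exact sub_eq_iff_eq_add.symm

theorem stmt4_general {Fq L : Type*} [Field Fq] [Fintype Fq] [Field L] [Algebra Fq L]
    (θ : L) (hθ : Transcendental Fq θ)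
    (s : ℕ)
    (A : ℕ → Matrix (Fin s) (Fin s) L)
    (N : Matrix (Fin s) (Fin s) L) (hnil : IsNilpotent N)
    (hA0 : A 0 = θ • (1 : Matrix (Fin s) (Fin s) L) + N) :
    ∃! α : ℕ → Matrix (Fin s) (Fin s) L,
      α 0 = 1 ∧
      ∀ n, α n * (A 0).map (fun x => x ^ (Fintype.card Fq) ^ n) =
        ∑ j ∈ Finset.range (n + 1),
          A j * (α (n - j)).map (fun x => x ^ (Fintype.card Fq) ^ j) := by
  have hT : ∀ n, Bijective fun X =>
      X * (A 0).map (fun x => x ^ Fintype.card Fq ^ (n + 1)) - A 0 * X :=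
    fun n => hA0 ▸ bijective_mul_frobenius_sub_mul hθ hnil n.succ_ne_zero
  refine (existsUnique_congr fun α => ?_).1 <| existsUnique_seq_of_bijective 1 _ hT
    (fun n α => ∑ j ∈ range (n + 1),
      A (j + 1) * (α (n - j)).map fun x => x ^ Fintype.card Fq ^ (j + 1))
    fun n f g hfg => sum_congr rfl fun j _ => by rw [hfg (n - j) (Nat.sub_le n j)]
  refine and_congr_right fun h0 => Iff.trans ?_ Nat.and_forall_add_one
  rw [and_iff_right (by simp [h0])]
  exact forall_congr' fun n => (mul_map_pow_eq_sum_succ_iff _ A α n).symm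

/-- For a `t`-module `G = (𝔾_a^s, φ)` over an `A`-field `L` of generic characteristic
(`θ` transcendental over `𝔽_q ⊆ L`), with `φ(t) = A₀ + A₁τ + ⋯ + A_m τ^m` and
`A₀ = dφ(t) = θ·Id_s + N`, `N` nilpotent, there is a unique twisted power series
`Exp_G = Σ_{i≥0} αᵢ τⁱ ∈ Mat_s(L)[[τ]]` with `α₀ = Id` satisfying
`Exp_G ∘ dφ(t) = φ(t) ∘ Exp_G`.  Comparing `τⁿ`-coefficients, the functional
equation reads `αₙ · A₀^{(n)} = Σ_{j≤n} A_j · α_{n−j}^{(j)}`, where `B^{(j)}` is the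
entrywise `q^j`-power twist. -/
theorem stmt4 {Fq L : Type*} [Field Fq] [Fintype Fq] [Field L] [Algebra Fq L]
    (θ : L) (hθ : Transcendental Fq θ)
    (s : ℕ) (hs : 0 < s)
    (A : ℕ → Matrix (Fin s) (Fin s) L) (m : ℕ) (hfin : ∀ j, m < j → A j = 0)
    (N : Matrix (Fin s) (Fin s) L) (hnil : IsNilpotent N)
    (hA0 : A 0 = θ • (1 : Matrix (Fin s) (Fin s) L) + N) :
    ∃! α : ℕ → Matrix (Fin s) (Fin s) L,
      α 0 = 1 ∧
      ∀ n, α n * (A 0).map (fun x => x ^ (Fintype.card Fq) ^ n) =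
        ∑ j ∈ Finset.range (n + 1),
          A j * (α (n - j)).map (fun x => x ^ (Fintype.card Fq) ^ j) :=
  stmt4_general θ hθ s A N hnil hA0
end

section
/- The functor G ↦ H_G from the category of A-finite t-modules of dimension d over K̄ to the category of A-finite dual t-motives of rank d over K̄[σ] is fully faithful: every left K̄[t,σ]-module homomorphism H_G → H_{G'} equals ε_P for a unique morphism P: G → G' of t-modules (P ∈ Mat_{d'×d}(K̄[τ]) with Pφ(t) = φ'(t)P), where ε_P(h) = hP^*. -/
/-!
A `K̄[σ]`-linear map `f : H_G → H_{G'}` is determined by its values on the standard basis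
`e_j`, since every element of `H_G` is `v + σ h'` with `v ∈ Mat_{1×d}(K̄)` and `h'` of smaller
`σ`-degree. Hence `f = ε_S`, where the `j`-th row of `S` is `f e_j`, and `S = P^*` for a unique
`P` because `*` is bijective. As `*` is an anti-isomorphism, `P φ(t) = φ'(t) P` amounts to
`φ(t)^* P^* = P^* φ'(t)^*`, which is the `t`-equivariance of `f` read off on the basis.
-/

/-- Twisted (`τ`-side) convolution of matrix coefficient sequences: the product in
matrices over `K̄[τ]` (`τ c = c^q τ`, i.e. twist by `φ`). -/
noncomputable def tConv {L : Type*} [Field L] (φ : L → L) {a b c : ℕ}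
    (B : ℕ → Matrix (Fin a) (Fin b) L) (C : ℕ → Matrix (Fin b) (Fin c) L) :
    ℕ → Matrix (Fin a) (Fin c) L :=
  fun n => ∑ i ∈ Finset.range (n + 1), B i * (C (n - i)).map (φ^[i])

/-- Twisted (`σ`-side) convolution: the product in matrices over `K̄[σ]`
(`σ c = c^{(−1)} σ`, i.e. twist by `φ⁻¹`). -/
noncomputable def sConv {L : Type*} [Field L] (φinv : L → L) {a b c : ℕ}
    (B : ℕ → Matrix (Fin a) (Fin b) L) (C : ℕ → Matrix (Fin b) (Fin c) L) :
    ℕ → Matrix (Fin a) (Fin c) L :=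
  fun n => ∑ i ∈ Finset.range (n + 1), B i * (C (n - i)).map (φinv^[i])

/-- The anti-isomorphism `* : Mat_{a×b}(K̄[τ]) → Mat_{b×a}(K̄[σ])`,
`(Σ aᵢτⁱ)^* = Σ aᵢ^{(−i)}σⁱ` extended by transposition. -/
noncomputable def starOf {L : Type*} [Field L] (φinv : L → L) {a b : ℕ}
    (P : ℕ → Matrix (Fin a) (Fin b) L) : ℕ → Matrix (Fin b) (Fin a) L :=
  fun k => ((P k).map (φinv^[k])).transpose

/-- Finitely supported coefficient sequences (genuine twisted polynomials). -/
def FinSuppSeq {M : Type*} [Zero M] (h : ℕ → M) : Prop := ∃ n, ∀ k, n < k → h k = 0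

/-- Left multiplication by `σ` on `H_G = Mat_{1×d}(K̄[σ])`. -/
noncomputable def sigmaShift {L : Type*} [Field L] (φinv : L → L) {d : ℕ}
    (h : ℕ → Matrix (Fin 1) (Fin d) L) : ℕ → Matrix (Fin 1) (Fin d) L :=
  fun k => if k = 0 then 0 else (h (k - 1)).map φinv

section TwistedConvolution

variable {L : Type*} [Field L] {a b c : ℕ}

lemma sConv_add_left (g : L → L) (B B' : ℕ → Matrix (Fin a) (Fin b) L)
    (C : ℕ → Matrix (Fin b) (Fin c) L) :
    sConv g (B + B') C = sConv g B C + sConv g B' C := by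
  funext n
  simp only [sConv, Pi.add_apply, Matrix.add_mul, Finset.sum_add_distrib]

lemma sConv_smul_left (g : L → L) (x : L) (B : ℕ → Matrix (Fin a) (Fin b) L)
    (C : ℕ → Matrix (Fin b) (Fin c) L) :
    sConv g (x • B) C = x • sConv g B C := by
  funext n
  simp only [sConv, Pi.smul_apply, Matrix.smul_mul, Finset.smul_sum]

lemma sConv_const_mul_left {e : ℕ} (g : L → L) (E : Matrix (Fin e) (Fin a) L)
    (B : ℕ → Matrix (Fin a) (Fin b) L) (C : ℕ → Matrix (Fin b) (Fin c) L) :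
    sConv g (fun n => E * B n) C = fun n => E * sConv g B C n := by
  funext n
  simp only [sConv, Matrix.mul_sum, Matrix.mul_assoc]

lemma sConv_single_zero_left (g : L → L) (v : Matrix (Fin a) (Fin b) L)
    (C : ℕ → Matrix (Fin b) (Fin c) L) :
    sConv g (Pi.single 0 v) C = fun n => v * C n := by
  funext n
  rw [sConv, Finset.sum_eq_single_of_mem 0 (by simp)]
  · simp
  · intro i _ hi
    simp [hi]

lemma sConv_sigmaShift {F : Type*} [FunLike F L L] [RingHomClass F L L] (g : F) {d : ℕ}
    (B : ℕ → Matrix (Fin 1) (Fin d) L) (C : ℕ → Matrix (Fin d) (Fin c) L) :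
    sConv g (sigmaShift g B) C = sigmaShift g (sConv g B C) := by
  funext n
  cases n with
  | zero => simp [sConv, sigmaShift]
  | succ n =>
    rw [sConv, Finset.sum_range_succ']
    simp only [sigmaShift, add_tsub_cancel_right, Nat.add_one_ne_zero, if_false,
      sConv, Nat.add_sub_add_right]
    ext r s
    simp [Matrix.sum_apply, Matrix.mul_apply, map_sum, ← Function.iterate_succ_apply,
      Function.iterate_succ_apply']

end TwistedConvolution

section Star

variable {L : Type*} [Field L] {a b c : ℕ}

lemma symm_iterate_iterate_of_le (g : L ≃+* L) {i n : ℕ} (h : i ≤ n) (x : L) :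
    (⇑g.symm)^[n] ((⇑g)^[i] x) = (⇑g.symm)^[n - i] x := by
  conv_lhs => rw [← Nat.sub_add_cancel h, Function.iterate_add_apply,
    Function.LeftInverse.iterate g.symm_apply_apply i x]

lemma starOf_tConv (g : L ≃+* L) (B : ℕ → Matrix (Fin a) (Fin b) L)
    (C : ℕ → Matrix (Fin b) (Fin c) L) :
    starOf (⇑g.symm) (tConv (⇑g) B C) =
      sConv (⇑g.symm) (starOf (⇑g.symm) C) (starOf (⇑g.symm) B) := by
  funext n
  have hpow : (⇑g.symm)^[n] = ⇑((g.symm : L →+* L) ^ n) := rfl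
  rw [sConv, ← Finset.sum_range_reflect]
  ext r s
  simp only [starOf, tConv, Matrix.transpose_apply, Matrix.map_apply, Matrix.sum_apply,
    Matrix.mul_apply, hpow, map_sum, map_mul]
  simp only [← hpow]
  refine Finset.sum_congr rfl fun i hi => Finset.sum_congr rfl fun l _ => ?_
  have hin : i ≤ n := Nat.lt_succ_iff.mp (Finset.mem_range.mp hi)
  rw [show n + 1 - 1 - i = n - i by omega, Nat.sub_sub_self hin,
    symm_iterate_iterate_of_le g hin, ← Function.iterate_add_apply, Nat.sub_add_cancel hin,
    mul_comm]

section RingHomClass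

variable {F : Type*} [FunLike F L L] [RingHomClass F L L] (g : F)

lemma starOf_injective :
    Function.Injective (starOf (⇑g) : (ℕ → Matrix (Fin a) (Fin b) L) → _) := by
  intro P Q h
  funext k
  exact Matrix.map_injective ((RingHom.injective (g : L →+* L)).iterate k)
    (Matrix.transpose_injective (congrFun h k))

lemma starOf_apply_eq_zero_iff (P : ℕ → Matrix (Fin a) (Fin b) L) (k : ℕ) :
    starOf (⇑g) P k = 0 ↔ P k = 0 := by
  have hinj : Function.Injective (⇑g)^[k] := (RingHom.injective (g : L →+* L)).iterate k
  rw [starOf, Matrix.transpose_eq_zero,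
    (Matrix.map_injective hinj).eq_iff' (Matrix.map_zero _ (iterate_map_zero g k))]

lemma finSuppSeq_starOf_iff (P : ℕ → Matrix (Fin a) (Fin b) L) :
    FinSuppSeq (starOf (⇑g) P) ↔ FinSuppSeq P := by
  simp only [FinSuppSeq, starOf_apply_eq_zero_iff]

end RingHomClass

lemma starOf_surjective (g : L ≃+* L) :
    Function.Surjective (starOf (⇑g) : (ℕ → Matrix (Fin a) (Fin b) L) → _) := fun S =>
  ⟨starOf (⇑g.symm) S, by
    funext k
    ext i j
    simp [starOf, Function.LeftInverse.iterate g.apply_symm_apply k _]⟩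

end Star

lemma FinSuppSeq.of_finite_family {ι M N : Type*} [Finite ι] [Zero M] [Zero N]
    (F : ι → ℕ → M) (hF : ∀ i, FinSuppSeq (F i)) (h : ℕ → N)
    (hh : ∀ n, (∀ i, F i n = 0) → h n = 0) : FinSuppSeq h := by
  cases nonempty_fintype ι
  choose N hN using hF
  exact ⟨Finset.univ.sup N, fun k hk =>
    hh k fun i => hN i k ((Finset.le_sup (Finset.mem_univ i)).trans_lt hk)⟩

lemma finSuppSeq_single_zero {M : Type*} [Zero M] (v : M) :
    FinSuppSeq (Pi.single 0 v : ℕ → M) :=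
  ⟨0, fun _ hk => by simp [hk.ne']⟩

section SigmaLinear

variable {L : Type*} [Field L] {c d d' : ℕ}

lemma finSuppSeq_sigmaShift {F : Type*} [FunLike F L L] [RingHomClass F L L] (g : F)
    {h : ℕ → Matrix (Fin 1) (Fin d) L} (hh : FinSuppSeq h) : FinSuppSeq (sigmaShift g h) := by
  obtain ⟨n, hn⟩ := hh
  refine ⟨n + 1, fun k hk => ?_⟩
  simp [sigmaShift, show k ≠ 0 by omega, hn (k - 1) (by omega)]

lemma finSuppSeq_sConv_single_zero (g : L → L) (v : Matrix (Fin 1) (Fin d) L)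
    {C : ℕ → Matrix (Fin d) (Fin c) L} (hC : FinSuppSeq C) :
    FinSuppSeq (sConv g (Pi.single 0 v) C) := by
  obtain ⟨n, hn⟩ := hC
  exact ⟨n, fun k hk => by simp [sConv_single_zero_left, hn k hk]⟩

lemma sConv_single_zero_assoc (g : L → L) (v : Matrix (Fin 1) (Fin d) L)
    (B : ℕ → Matrix (Fin d) (Fin c) L) {e : ℕ} (C : ℕ → Matrix (Fin c) (Fin e) L) :
    sConv g (sConv g (Pi.single 0 v) B) C = sConv g (Pi.single 0 v) (sConv g B C) := by
  rw [sConv_single_zero_left, sConv_const_mul_left, sConv_single_zero_left]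

lemma eq_of_forall_sConv_single_eq (g : L → L) {X Y : ℕ → Matrix (Fin d) (Fin c) L}
    (h : ∀ j, sConv g (Pi.single 0 (Matrix.single (0 : Fin 1) j (1 : L))) X =
      sConv g (Pi.single 0 (Matrix.single (0 : Fin 1) j (1 : L))) Y) : X = Y := by
  funext n
  ext j i
  have hj := congrFun (h j) n
  simp only [sConv_single_zero_left] at hj
  simpa using congrFun (congrFun hj 0) i

lemma eq_single_zero_add_sigmaShift (g : L ≃+* L) (h : ℕ → Matrix (Fin 1) (Fin d) L) :
    h = Pi.single 0 (h 0) + sigmaShift (⇑g) (fun k => (h (k + 1)).map ⇑g.symm) := by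
  funext k
  cases k with
  | zero => simp [sigmaShift]
  | succ k =>
    ext
    simp [sigmaShift]

/-- A left `K̄[σ]`-module homomorphism `H_G → H_{G'}`, recorded on finitely supported
sequences, `g` being the twist `c ↦ c^{(-1)}` of `σ`. -/
structure IsSigmaLinear (g : L → L)
    (f : (ℕ → Matrix (Fin 1) (Fin d) L) → ℕ → Matrix (Fin 1) (Fin d') L) : Prop where
  map_add : ∀ h h', FinSuppSeq h → FinSuppSeq h' → f (h + h') = f h + f h'
  map_smul : ∀ (c : L) h, FinSuppSeq h → f (c • h) = c • f h
  map_sigmaShift : ∀ h, FinSuppSeq h → f (sigmaShift g h) = sigmaShift g (f h)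

lemma isSigmaLinear_sConv {F : Type*} [FunLike F L L] [RingHomClass F L L] (g : F)
    (S : ℕ → Matrix (Fin d) (Fin d') L) : IsSigmaLinear (⇑g) (fun h => sConv (⇑g) h S) where
  map_add h h' _ _ := sConv_add_left _ h h' S
  map_smul c h _ := sConv_smul_left _ c h S
  map_sigmaShift h _ := sConv_sigmaShift g h S

namespace IsSigmaLinear

variable {g : L → L} {f f' : (ℕ → Matrix (Fin 1) (Fin d) L) → ℕ → Matrix (Fin 1) (Fin d') L}

lemma map_zero (hf : IsSigmaLinear g f) : f 0 = 0 := by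
  have h00 := hf.map_add 0 0 ⟨0, fun _ _ => rfl⟩ ⟨0, fun _ _ => rfl⟩
  rwa [add_zero, left_eq_add] at h00

lemma eq_on_single_zero (hf : IsSigmaLinear g f) (hf' : IsSigmaLinear g f')
    (hbasis : ∀ j, f (Pi.single 0 (Matrix.single 0 j 1)) = f' (Pi.single 0 (Matrix.single 0 j 1)))
    (v : Matrix (Fin 1) (Fin d) L) : f (Pi.single 0 v) = f' (Pi.single 0 v) := by
  induction v using Matrix.induction_on' with
  | h_zero => rw [Pi.single_zero, hf.map_zero, hf'.map_zero]
  | h_add v w hv hw =>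
    rw [Pi.single_add, hf.map_add _ _ (finSuppSeq_single_zero v) (finSuppSeq_single_zero w),
      hf'.map_add _ _ (finSuppSeq_single_zero v) (finSuppSeq_single_zero w), hv, hw]
  | h_std_basis i j x =>
    obtain rfl : i = 0 := Subsingleton.elim i 0
    have hx : Matrix.single 0 j x = x • Matrix.single (0 : Fin 1) j (1 : L) := by simp
    rw [hx, Pi.single_smul, hf.map_smul _ _ (finSuppSeq_single_zero _),
      hf'.map_smul _ _ (finSuppSeq_single_zero _), hbasis]

lemma eq_of_eq_on_basis {φ : L ≃+* L} (hf : IsSigmaLinear (⇑φ) f) (hf' : IsSigmaLinear (⇑φ) f')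
    (hbasis : ∀ j, f (Pi.single 0 (Matrix.single 0 j 1)) = f' (Pi.single 0 (Matrix.single 0 j 1)))
    {h : ℕ → Matrix (Fin 1) (Fin d) L} (hh : FinSuppSeq h) : f h = f' h := by
  suffices key : ∀ n (h : ℕ → Matrix (Fin 1) (Fin d) L), (∀ k, n ≤ k → h k = 0) → f h = f' h by
    obtain ⟨n, hn⟩ := hh
    exact key (n + 1) h hn
  intro n
  induction n with
  | zero =>
    intro h hh
    obtain rfl : h = 0 := funext fun k => hh k k.zero_le
    rw [hf.map_zero, hf'.map_zero]
  | succ n ih =>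
    intro h hh
    set t : ℕ → Matrix (Fin 1) (Fin d) L := fun k => (h (k + 1)).map ⇑φ.symm
    have ht : ∀ k, n ≤ k → t k = 0 := fun k hk => by simp [t, hh (k + 1) (by omega)]
    have ht_fs : FinSuppSeq t := ⟨n, fun k hk => ht k hk.le⟩
    have h0_fs := finSuppSeq_single_zero (h 0)
    have hσt_fs := finSuppSeq_sigmaShift φ ht_fs
    rw [eq_single_zero_add_sigmaShift φ h, hf.map_add _ _ h0_fs hσt_fs,
      hf'.map_add _ _ h0_fs hσt_fs, hf.map_sigmaShift _ ht_fs, hf'.map_sigmaShift _ ht_fs,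
      ih t ht, eq_on_single_zero hf hf' hbasis]

end IsSigmaLinear

end SigmaLinear

theorem stmt11_general {L : Type*} [Field L]
    (φ : L ≃+* L)
    (d d' : ℕ)
    (A : ℕ → Matrix (Fin d) (Fin d) L) (kA : ℕ) (hA : ∀ j, kA < j → A j = 0)
    (A' : ℕ → Matrix (Fin d') (Fin d') L)
    (f : (ℕ → Matrix (Fin 1) (Fin d) L) → ℕ → Matrix (Fin 1) (Fin d') L)
    (hadd : ∀ g h, FinSuppSeq g → FinSuppSeq h → f (g + h) = f g + f h)
    (hscal : ∀ (c : L) h, FinSuppSeq h →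
        f (fun k => c • h k) = fun k => c • f h k)
    (hsigma : ∀ h, FinSuppSeq h →
        f (sigmaShift (⇑φ.symm) h) = sigmaShift (⇑φ.symm) (f h))
    (ht : ∀ h, FinSuppSeq h →
        f (sConv (⇑φ.symm) h (starOf (⇑φ.symm) A)) =
          sConv (⇑φ.symm) (f h) (starOf (⇑φ.symm) A'))
    (hfin : ∀ h, FinSuppSeq h → FinSuppSeq (f h)) :
    ∃! P : ℕ → Matrix (Fin d') (Fin d) L,
      FinSuppSeq P ∧
      tConv (⇑φ) P A = tConv (⇑φ) A' P ∧
      ∀ h, FinSuppSeq h → f h = sConv (⇑φ.symm) h (starOf (⇑φ.symm) P) := by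
  have hf : IsSigmaLinear (⇑φ.symm) f := ⟨hadd, hscal, hsigma⟩
  set S : ℕ → Matrix (Fin d) (Fin d') L :=
    fun n => Matrix.of fun j i => f (Pi.single 0 (Matrix.single 0 j 1)) n 0 i
  have hfe : ∀ j, f (Pi.single 0 (Matrix.single 0 j 1)) =
      sConv (⇑φ.symm) (Pi.single 0 (Matrix.single 0 j 1)) S := fun j => by
    rw [sConv_single_zero_left]
    funext n
    ext r i
    obtain rfl : r = 0 := Subsingleton.elim r 0
    simp [S]
  have hrep : ∀ h, FinSuppSeq h → f h = sConv (⇑φ.symm) h S := fun h hh =>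
    hf.eq_of_eq_on_basis (isSigmaLinear_sConv φ.symm S) hfe hh
  have hS_fs : FinSuppSeq S :=
    FinSuppSeq.of_finite_family (fun j => f (Pi.single 0 (Matrix.single 0 j 1)))
      (fun j => hfin _ (finSuppSeq_single_zero _)) S fun n hn => by ext j i; simp [S, hn j]
  clear_value S
  obtain ⟨P, rfl⟩ := starOf_surjective φ.symm S
  refine ⟨P, ⟨(finSuppSeq_starOf_iff φ.symm P).1 hS_fs, ?_, hrep⟩, fun Q ⟨_, _, hQ⟩ => ?_⟩
  · have hA_fs : FinSuppSeq (starOf (⇑φ.symm) A) := (finSuppSeq_starOf_iff φ.symm A).2 ⟨kA, hA⟩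
    refine starOf_injective φ.symm ?_
    rw [starOf_tConv, starOf_tConv]
    refine eq_of_forall_sConv_single_eq (⇑φ.symm) fun j => ?_
    rw [← sConv_single_zero_assoc, ← hrep _ (finSuppSeq_sConv_single_zero _ _ hA_fs),
      ht _ (finSuppSeq_single_zero _), hfe, sConv_single_zero_assoc]
  · refine starOf_injective φ.symm (eq_of_forall_sConv_single_eq (⇑φ.symm) fun j => ?_)
    rw [← hQ _ (finSuppSeq_single_zero _), ← hfe]

/-- The functor `G ↦ H_G` (where `H_G = Mat_{1×d}(K̄[σ])` with `t`-action
`t·h = h·φ(t)^*`) from `A`-finite `t`-modules over `K̄` to `A`-finite dual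
`t`-motives is fully faithful: every left `K̄[t,σ]`-module homomorphism
`f : H_G → H_{G'}` (additive, `K̄`-linear, `σ`- and `t`-equivariant, preserving
finite support) equals `ε_P : h ↦ h·P^*` for a unique morphism of `t`-modules
`P ∈ Mat_{d'×d}(K̄[τ])` with `P·φ(t) = φ'(t)·P`.  Here `φ(t)`, `φ'(t)` are given by
their `τ`-coefficients `A`, `A'`. -/
theorem stmt11 {L : Type*} [Field L] (q : ℕ) (hq : 1 < q)
    (φ : L ≃+* L) (hφ : ∀ x : L, φ x = x ^ q)
    (d d' : ℕ)
    (A : ℕ → Matrix (Fin d) (Fin d) L) (kA : ℕ) (hA : ∀ j, kA < j → A j = 0)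
    (A' : ℕ → Matrix (Fin d') (Fin d') L) (kA' : ℕ) (hA' : ∀ j, kA' < j → A' j = 0)
    (f : (ℕ → Matrix (Fin 1) (Fin d) L) → ℕ → Matrix (Fin 1) (Fin d') L)
    (hadd : ∀ g h, FinSuppSeq g → FinSuppSeq h → f (g + h) = f g + f h)
    (hscal : ∀ (c : L) h, FinSuppSeq h →
        f (fun k => c • h k) = fun k => c • f h k)
    (hsigma : ∀ h, FinSuppSeq h →
        f (sigmaShift (⇑φ.symm) h) = sigmaShift (⇑φ.symm) (f h))
    (ht : ∀ h, FinSuppSeq h →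
        f (sConv (⇑φ.symm) h (starOf (⇑φ.symm) A)) =
          sConv (⇑φ.symm) (f h) (starOf (⇑φ.symm) A'))
    (hfin : ∀ h, FinSuppSeq h → FinSuppSeq (f h)) :
    ∃! P : ℕ → Matrix (Fin d') (Fin d) L,
      FinSuppSeq P ∧
      tConv (⇑φ) P A = tConv (⇑φ) A' P ∧
      ∀ h, FinSuppSeq h → f h = sConv (⇑φ.symm) h (starOf (⇑φ.symm) P) :=
  stmt11_general φ d d' A kA hA A' f hadd hscal hsigma ht hfin
end
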